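/- Let r, γ, β > 0 and let K be a compact subset of a real Banach space X, with C₀(K) := sup_{f∈K}‖f‖_X. Then there exists a constant c depending only on r, β, γ and C₀(K) such that for all integers n ≥ 3, ε_{⌈c·n·ln n⌉}(K)_X ≤ (n+1)^{-r} · sup_{m≥0}(m+1)^r δ̃_{m,γ,β}(K)_X (the inequality being trivial if the supremum is infinite). -/

import Mathlib

open Metric

def IsNorm {n : ℕ} (nrm : (Fin n → ℝ) → ℝ) : Prop :=
  (∀ x, 0 ≤ nrm x) ∧
  (∀ x, nrm x = 0 → x = 0) ∧
  (∀ (c : ℝ) (x), nrm (c • x) = |c| * nrm x) ∧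
  (∀ x y, nrm (x + y) ≤ nrm x + nrm y)

noncomputable def stableWidth (X : Type*) [NormedAddCommGroup X]
    (K : Set X) (n : ℕ) (γ : ℝ) : ℝ :=
  sInf { d | ∃ (nrm : (Fin n → ℝ) → ℝ) (a : X → Fin n → ℝ) (M : (Fin n → ℝ) → X),
    IsNorm nrm ∧
    (∀ f ∈ K, ∀ g ∈ K, nrm (a f - a g) ≤ γ * ‖f - g‖) ∧
    (∀ x y, ‖M x - M y‖ ≤ γ * nrm (x - y)) ∧
    d = ⨆ f : K, ‖(f : X) - M (a (f : X))‖ }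

noncomputable def modStableWidth (X : Type*) [NormedAddCommGroup X]
    (K : Set X) (n : ℕ) (γ : ℝ) : ℝ :=
  sInf { d | ∃ (nrm : (Fin n → ℝ) → ℝ) (a : X → Fin n → ℝ) (M : (Fin n → ℝ) → X),
    IsNorm nrm ∧
    (∀ f g : X, nrm (a f - a g) ≤ γ * ‖f - g‖) ∧
    (∀ x y, ‖M x - M y‖ ≤ γ * nrm (x - y)) ∧
    d = ⨆ f : K, ‖(f : X) - M (a (f : X))‖ }

noncomputable def entropyNumber (X : Type*) [NormedAddCommGroup X] (K : Set X) (n : ℕ) : ℝ :=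
  sInf { ε : ℝ | 0 < ε ∧ ∃ T : Finset X, T.card ≤ 2 ^ n ∧ K ⊆ ⋃ c ∈ T, closedBall c ε }

/-- The bounded stable manifold width δ̃_{n,γ,β}(K)_X: infimum of sup_{f∈K}‖f − M(a(f))‖
over norms ‖·‖_Y on ℝⁿ and pairs (a,M) with ‖a(f)‖_Y ≤ γ‖f‖ on K and
‖M(x)−M(y)‖ ≤ γ‖x−y‖_Y^β + E_{M∘a}(K). -/
noncomputable def boundedStableWidth (X : Type*) [NormedAddCommGroup X]
    (K : Set X) (n : ℕ) (γ β : ℝ) : ℝ :=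
  sInf { d | ∃ (nrm : (Fin n → ℝ) → ℝ) (a : X → Fin n → ℝ) (M : (Fin n → ℝ) → X),
    IsNorm nrm ∧
    (∀ f ∈ K, nrm (a f) ≤ γ * ‖f‖) ∧
    (∀ x y, ‖M x - M y‖ ≤ γ * nrm (x - y) ^ β + ⨆ f : K, ‖(f : X) - M (a (f : X))‖) ∧
    d = ⨆ f : K, ‖(f : X) - M (a (f : X))‖ }

/-!
Fix two distinct points `f₁, f₂ ∈ K`; since `ℝ⁰` is a point, `δ̃₀(K) ≥ ‖f₁ - f₂‖ / 2`, so `Λ` is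
bounded below independently of `n`. Take `m = q (n + 1)` with `q ^ r ≥ 4`, so that
`δ̃_m(K) ≤ (n + 1)^{-r} Λ / 4`, and a near-optimal scheme `(‖·‖_Y, a, M)` of dimension `m`. The set
`a(K)` lies in the `‖·‖_Y`-ball of radius `γ C₀`, which a volume argument covers by at most
`(1 + 2 γ C₀ / ε)^m` balls of radius `ε`; `M` maps their centres to centres of balls of radius
`γ ε^β + 2 E_{M∘a}(K)` covering `K`. With `ε = 4 γ C₀ 2^{-s}` there are at most `2^{s m}` of them,
and `s = ⌊⌈c n ln n⌉ / m⌋ ≳ ln n` makes `γ ε^β ≤ (n + 1)^{-r} Λ / 2` once `c` is large.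
-/

open MeasureTheory Module

section FiniteDimensional

variable {E : Type*} [NormedAddCommGroup E] [NormedSpace ℝ E] [FiniteDimensional ℝ E]

theorem card_le_of_pairwise_lt_dist {R ε : ℝ} (hR : 0 ≤ R) (hε : 0 < ε) {S : Finset E}
    (hSR : ∀ p ∈ S, ‖p‖ ≤ R) (hS : (S : Set E).Pairwise fun p q => ε < dist p q) :
    (S.card : ℝ) ≤ (1 + 2 * R / ε) ^ finrank ℝ E := by
  borelize E
  set μ : Measure E := Measure.addHaar
  set d := finrank ℝ E
  set v := μ.real (closedBall 0 1)
  have hv : 0 < v :=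
    ENNReal.toReal_pos (measure_closedBall_pos μ 0 one_pos).ne' measure_closedBall_lt_top.ne
  have hdisj : (S : Set E).PairwiseDisjoint fun p => closedBall p (ε / 2) :=
    fun p hp q hq hpq => closedBall_disjoint_closedBall (by linarith [hS hp hq hpq])
  have hsub : ⋃ p ∈ S, closedBall p (ε / 2) ⊆ closedBall 0 (R + ε / 2) := by
    refine Set.iUnion₂_subset fun p hp => closedBall_subset_closedBall' ?_
    simpa [add_comm] using hSR p hp
  have hvol : S.card * ((ε / 2) ^ d * v) ≤ (R + ε / 2) ^ d * v := by
    calc S.card * ((ε / 2) ^ d * v) = ∑ p ∈ S, μ.real (closedBall p (ε / 2)) := by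
          simp [Measure.addHaar_real_closedBall' μ _ (half_pos hε).le, d, v]
      _ = μ.real (⋃ p ∈ S, closedBall p (ε / 2)) :=
          (measureReal_biUnion_finset hdisj (fun p _ => measurableSet_closedBall)
            fun p _ => measure_closedBall_lt_top.ne).symm
      _ ≤ μ.real (closedBall 0 (R + ε / 2)) := measureReal_mono hsub measure_closedBall_lt_top.ne
      _ = (R + ε / 2) ^ d * v := Measure.addHaar_real_closedBall' μ _ (by positivity)
  have hbound : (1 + 2 * R / ε) ^ d = (R + ε / 2) ^ d / (ε / 2) ^ d := by
    rw [← div_pow]; congr 1; field_simp; ring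
  rw [hbound, le_div_iff₀ (by positivity)]
  nlinarith

theorem exists_finset_card_le_forall_norm_sub_le {R ε : ℝ} (hR : 0 ≤ R) (hε : 0 < ε) :
    ∃ P : Finset E, (P.card : ℝ) ≤ (1 + 2 * R / ε) ^ finrank ℝ E ∧
      ∀ x, ‖x‖ ≤ R → ∃ p ∈ P, ‖x - p‖ ≤ ε := by
  classical
  by_contra! hnet
  simp only [← dist_eq_norm] at hnet
  have hsep (k : ℕ) : ∃ S : Finset E, S.card = k ∧ (∀ p ∈ S, ‖p‖ ≤ R) ∧
      (S : Set E).Pairwise fun p q => ε < dist p q := by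
    induction k with
    | zero => exact ⟨∅, by simp⟩
    | succ k ih =>
      obtain ⟨S, hcard, hSR, hS⟩ := ih
      obtain ⟨x, hx, hxS⟩ := hnet S (card_le_of_pairwise_lt_dist hR hε hSR hS)
      have hxS' : x ∉ S := fun h => by simpa [hε.not_gt] using hxS x h
      refine ⟨insert x S, by rw [Finset.card_insert_of_notMem hxS', hcard], ?_, ?_⟩
      · exact (Finset.forall_mem_insert _ _ _).mpr ⟨hx, hSR⟩
      · rw [Finset.coe_insert, Set.pairwise_insert]
        exact ⟨hS, fun p hp _ => ⟨hxS p hp, dist_comm x p ▸ hxS p hp⟩⟩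
  set B := (1 + 2 * R / ε) ^ finrank ℝ E
  obtain ⟨S, hcard, hSR, hS⟩ := hsep (⌊B⌋₊ + 1)
  have := card_le_of_pairwise_lt_dist hR hε hSR hS
  rw [hcard, Nat.cast_add, Nat.cast_one] at this
  linarith [Nat.lt_floor_add_one B]

end FiniteDimensional

-- A type synonym for `ℝⁿ` carrying the norm `nrm`, so that Haar measure on finite-dimensional
-- normed spaces applies to it.
def FinFunWithNorm {n : ℕ} (_nrm : (Fin n → ℝ) → ℝ) : Type := Fin n → ℝ

namespace FinFunWithNorm

variable {n : ℕ} {nrm : (Fin n → ℝ) → ℝ}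

instance : AddCommGroup (FinFunWithNorm nrm) := inferInstanceAs (AddCommGroup (Fin n → ℝ))

instance : Module ℝ (FinFunWithNorm nrm) := inferInstanceAs (Module ℝ (Fin n → ℝ))

instance : FiniteDimensional ℝ (FinFunWithNorm nrm) :=
  inferInstanceAs (FiniteDimensional ℝ (Fin n → ℝ))

theorem finrank_eq : finrank ℝ (FinFunWithNorm nrm) = n := Module.finrank_fin_fun ℝ

instance [h : Fact (IsNorm nrm)] : NormedAddCommGroup (FinFunWithNorm nrm) :=
  AddGroupNorm.toNormedAddCommGroup
    { toFun := nrm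
      map_zero' := show nrm 0 = 0 by simpa using h.out.2.2.1 0 (0 : Fin n → ℝ)
      add_le' := h.out.2.2.2
      neg' := show ∀ y : Fin n → ℝ, nrm (-y) = nrm y from
        fun y => by simpa using h.out.2.2.1 (-1) y
      eq_zero_of_map_eq_zero' := h.out.2.1 }

instance [h : Fact (IsNorm nrm)] : NormedSpace ℝ (FinFunWithNorm nrm) where
  norm_smul_le c x := (h.out.2.2.1 c x).le

end FinFunWithNorm

theorem isNorm_norm (n : ℕ) : IsNorm fun x : Fin n → ℝ => ‖x‖ :=
  ⟨norm_nonneg, fun _ => norm_eq_zero.mp, fun c x => by simp only [norm_smul, Real.norm_eq_abs],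
    norm_add_le⟩

theorem IsNorm.exists_finset_card_le_forall_le {m : ℕ} {nrm : (Fin m → ℝ) → ℝ} (h : IsNorm nrm)
    {R ε : ℝ} (hR : 0 ≤ R) (hε : 0 < ε) :
    ∃ P : Finset (Fin m → ℝ), (P.card : ℝ) ≤ (1 + 2 * R / ε) ^ m ∧
      ∀ x, nrm x ≤ R → ∃ p ∈ P, nrm (x - p) ≤ ε := by
  have : Fact (IsNorm nrm) := ⟨h⟩
  obtain ⟨P, hP, hnet⟩ :=
    exists_finset_card_le_forall_norm_sub_le (E := FinFunWithNorm nrm) hR hε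
  rw [FinFunWithNorm.finrank_eq] at hP
  exact ⟨P, hP, hnet⟩

theorem one_add_two_mul_div_pow_le {R : ℝ} (hR : 0 < R) {s : ℕ} (hs : 1 ≤ s) (m : ℕ) :
    (1 + 2 * R / (4 * R / 2 ^ s)) ^ m ≤ (2 : ℝ) ^ (s * m) := by
  have h2s : (2 : ℝ) ≤ 2 ^ s := by simpa using pow_le_pow_right₀ one_le_two hs
  have hbase : 1 + 2 * R / (4 * R / 2 ^ s) = 1 + 2 ^ s / 2 := by field_simp; ring
  rw [hbase, pow_mul]
  exact pow_le_pow_left₀ (by positivity) (by linarith) m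

theorem exists_nat_le_rpow {r : ℝ} (hr : 0 < r) (C : ℝ) : ∃ q : ℕ, 0 < q ∧ C ≤ (q : ℝ) ^ r :=
  (((tendsto_rpow_atTop hr).comp tendsto_natCast_atTop_atTop).eventually_ge_atTop C).and
    (Filter.eventually_gt_atTop 0) |>.exists.imp fun _ h => h.symm

theorem exists_pos_forall_mul_log_lt_div {q : ℕ} (hq : 0 < q) {A : ℝ} (hA : 0 ≤ A) :
    ∃ c > 0, ∀ n : ℕ, 3 ≤ n →
      A * Real.log (n + 1) < (⌈c * n * Real.log n⌉₊ / (q * (n + 1)) : ℕ) := by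
  refine ⟨2 * q * (2 * A + 1), by positivity, fun n hn => ?_⟩
  set c := 2 * q * (2 * A + 1)
  set m := q * (n + 1)
  set N := ⌈c * n * Real.log n⌉₊
  have hn3 : (3 : ℝ) ≤ n := by exact_mod_cast hn
  have hlog : 1 ≤ Real.log n := by
    rw [Real.le_log_iff_exp_le (by positivity)]
    linarith [Real.exp_one_lt_d9]
  have hlog_succ : Real.log (n + 1) ≤ 2 * Real.log n := by
    calc Real.log (n + 1) ≤ Real.log ((n : ℝ) ^ 2) := Real.log_le_log (by positivity) (by nlinarith)
      _ = 2 * Real.log n := by rw [Real.log_pow]; norm_num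
  have hm : (m : ℝ) ≤ 2 * q * n := by
    simp only [m, Nat.cast_mul, Nat.cast_add, Nat.cast_one]
    nlinarith [(Nat.cast_pos.mpr hq : (0 : ℝ) < q)]
  have hN : c * n * Real.log n < ((N / m : ℕ) + 1) * m := by
    have : N < (N / m + 1) * m := by
      rw [add_one_mul]; exact Nat.lt_div_mul_add (Nat.mul_pos hq n.succ_pos)
    calc c * n * Real.log n ≤ N := Nat.le_ceil _
      _ < ((N / m : ℕ) + 1) * m := by exact_mod_cast this
  have hq0 : (0 : ℝ) < 2 * q * n := by positivity
  have hsucc : (2 * A + 1) * Real.log n < (N / m : ℕ) + 1 := by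
    refine lt_of_mul_lt_mul_right ?_ hq0.le
    calc (2 * A + 1) * Real.log n * (2 * q * n) = c * n * Real.log n := by ring
      _ < ((N / m : ℕ) + 1) * m := hN
      _ ≤ ((N / m : ℕ) + 1) * (2 * q * n) := by gcongr
  nlinarith

theorem mul_rpow_le_two_rpow {D x r β s : ℝ} (hβ : 0 < β) (hx : Real.exp 1 ≤ x)
    (hs : (max (Real.log D) 0 + r) / (β * Real.log 2) * Real.log x ≤ s) :
    D * x ^ r ≤ 2 ^ (s * β) := by
  have hx0 : 0 < x := (Real.exp_pos 1).trans_le hx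
  rcases le_or_gt D 0 with hD | hD
  · exact (mul_nonpos_of_nonpos_of_nonneg hD (by positivity)).trans (by positivity)
  have hlogx : 1 ≤ Real.log x := (Real.le_log_iff_exp_le hx0).mpr hx
  rw [← Real.log_le_log_iff (by positivity) (by positivity), Real.log_mul hD.ne' (by positivity),
    Real.log_rpow hx0, Real.log_rpow two_pos]
  have hlog2 : 0 < β * Real.log 2 := mul_pos hβ (Real.log_pos one_lt_two)
  rw [div_mul_eq_mul_div, div_le_iff₀ hlog2] at hs
  nlinarith [le_max_left (Real.log D) 0, le_max_right (Real.log D) 0]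

theorem mul_div_two_pow_rpow_le {γ B β Λ₀ r x : ℝ} {s : ℕ} (hγ : 0 < γ) (hB : 0 < B)
    (hβ : 0 < β) (hΛ₀ : 0 < Λ₀) (hx : Real.exp 1 ≤ x)
    (hs : (max (Real.log (2 * γ * B ^ β / Λ₀)) 0 + r) / (β * Real.log 2) * Real.log x ≤ s) :
    γ * (B / 2 ^ s) ^ β ≤ x ^ (-r) * Λ₀ / 2 := by
  have hx0 : 0 < x := (Real.exp_pos 1).trans_le hx
  have hD := mul_rpow_le_two_rpow hβ hx hs
  rw [Real.div_rpow hB.le (by positivity), ← Real.rpow_natCast, ← Real.rpow_mul zero_le_two,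
    Real.rpow_neg hx0.le]
  calc γ * (B ^ β / 2 ^ ((s : ℝ) * β)) ≤ γ * (B ^ β / (2 * γ * B ^ β / Λ₀ * x ^ r)) := by
        gcongr
    _ = (x ^ r)⁻¹ * Λ₀ / 2 := by field_simp

section Widths

variable {X : Type*} [NormedAddCommGroup X] {K : Set X}

theorem entropyNumber_le_of_subset_biUnion {N : ℕ} {ρ : ℝ} (hρ : 0 < ρ) (T : Finset X)
    (hT : T.card ≤ 2 ^ N) (hKT : K ⊆ ⋃ c ∈ T, closedBall c ρ) : entropyNumber X K N ≤ ρ :=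
  csInf_le ⟨0, fun _ hε => hε.1.le⟩ ⟨hρ, T, hT, hKT⟩

theorem entropyNumber_nonpos_of_subsingleton (hK : K.Subsingleton) (N : ℕ) :
    entropyNumber X K N ≤ 0 := by
  refine le_of_forall_pos_le_add fun ρ hρ => ?_
  rw [zero_add]
  refine entropyNumber_le_of_subset_biUnion hρ hK.finite.toFinset ?_ fun f hf => ?_
  · calc hK.finite.toFinset.card ≤ 1 :=
          Finset.card_le_one.mpr fun f hf g hg => hK (by simpa using hf) (by simpa using hg)
      _ ≤ 2 ^ N := Nat.one_le_two_pow
  · exact Set.mem_biUnion (hK.finite.mem_toFinset.mpr hf) (mem_closedBall_self hρ.le)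

variable (X) in
def boundedStableErrors (K : Set X) (n : ℕ) (γ β : ℝ) : Set ℝ :=
  { d | ∃ (nrm : (Fin n → ℝ) → ℝ) (a : X → Fin n → ℝ) (M : (Fin n → ℝ) → X),
    IsNorm nrm ∧
    (∀ f ∈ K, nrm (a f) ≤ γ * ‖f‖) ∧
    (∀ x y, ‖M x - M y‖ ≤ γ * nrm (x - y) ^ β + ⨆ f : K, ‖(f : X) - M (a (f : X))‖) ∧
    d = ⨆ f : K, ‖(f : X) - M (a (f : X))‖ }

theorem boundedStableWidth_eq_sInf (n : ℕ) (γ β : ℝ) :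
    boundedStableWidth X K n γ β = sInf (boundedStableErrors X K n γ β) := rfl

theorem boundedStableErrors_nonempty {γ : ℝ} (hγ : 0 ≤ γ) (n : ℕ) (β : ℝ) :
    (boundedStableErrors X K n γ β).Nonempty := by
  refine ⟨_, fun x => ‖x‖, 0, 0, isNorm_norm n, fun f _ => ?_, fun x y => ?_, rfl⟩
  · simpa using mul_nonneg hγ (norm_nonneg f)
  · have hE : 0 ≤ ⨆ f : K, ‖(f : X) - (0 : (Fin n → ℝ) → X) 0‖ :=
      Real.iSup_nonneg fun _ => norm_nonneg _
    simpa using add_nonneg (mul_nonneg hγ (Real.rpow_nonneg (norm_nonneg (x - y)) β)) hE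

theorem boundedStableWidth_nonneg (n : ℕ) (γ β : ℝ) : 0 ≤ boundedStableWidth X K n γ β :=
  Real.sInf_nonneg fun _ ⟨_, _, _, _, _, _, hd⟩ => hd ▸ Real.iSup_nonneg fun _ => norm_nonneg _

theorem norm_sub_le_iSup_of_forall_le {n : ℕ} {nrm : (Fin n → ℝ) → ℝ} {a : X → Fin n → ℝ}
    {M : (Fin n → ℝ) → X} {γ β R : ℝ} (hK : Bornology.IsBounded K) (hnrm : IsNorm nrm)
    (hγ : 0 ≤ γ) (hβ : 0 ≤ β) (ha : ∀ f ∈ K, nrm (a f) ≤ R)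
    (hM : ∀ x y, ‖M x - M y‖ ≤ γ * nrm (x - y) ^ β + ⨆ f : K, ‖(f : X) - M (a (f : X))‖)
    {f : X} (hf : f ∈ K) : ‖f - M (a f)‖ ≤ ⨆ g : K, ‖(g : X) - M (a (g : X))‖ := by
  set E := ⨆ g : K, ‖(g : X) - M (a (g : X))‖
  obtain ⟨C, hC⟩ := hK.exists_norm_le
  refine le_ciSup (f := fun g : K => ‖(g : X) - M (a g)‖)
    ⟨C + (γ * R ^ β + E) + ‖M 0‖, ?_⟩ (⟨f, hf⟩ : K)
  rintro _ ⟨⟨g, hg⟩, rfl⟩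
  have hMg := hM (a g) 0
  rw [sub_zero] at hMg
  have hag : nrm (a g) ^ β ≤ R ^ β := Real.rpow_le_rpow (hnrm.1 _) (ha g hg) hβ
  show ‖g - M (a g)‖ ≤ _
  linarith [norm_sub_le g (M (a g)), norm_sub_norm_le (M (a g)) (M 0), hC g hg,
    mul_le_mul_of_nonneg_left hag hγ]

theorem half_norm_sub_le_boundedStableWidth_zero {γ : ℝ} (hK : Bornology.IsBounded K)
    (hγ : 0 ≤ γ) {β : ℝ} (hβ : 0 ≤ β) {f₁ f₂ : X} (hf₁ : f₁ ∈ K) (hf₂ : f₂ ∈ K) :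
    ‖f₁ - f₂‖ / 2 ≤ boundedStableWidth X K 0 γ β := by
  refine le_csInf (boundedStableErrors_nonempty hγ 0 β) ?_
  rintro _ ⟨nrm, a, M, hnrm, -, hM, rfl⟩
  -- `ℝ⁰` is a point, so `M ∘ a` is constant.
  have ha : ∀ f ∈ K, nrm (a f) ≤ nrm 0 := fun f _ => (Subsingleton.elim (a f) 0) ▸ le_rfl
  have h₁ := norm_sub_le_iSup_of_forall_le hK hnrm hγ hβ ha hM hf₁
  have h₂ := norm_sub_le_iSup_of_forall_le hK hnrm hγ hβ ha hM hf₂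
  rw [Subsingleton.elim (a f₂) (a f₁), ← norm_sub_rev] at h₂
  linarith [norm_sub_le_norm_sub_add_norm_sub f₁ (M (a f₁)) f₂]

theorem subset_biUnion_closedBall_image [DecidableEq X] {m : ℕ} {nrm : (Fin m → ℝ) → ℝ}
    {a : X → Fin m → ℝ} {M : (Fin m → ℝ) → X} {P : Finset (Fin m → ℝ)} {γ β ε E : ℝ}
    (hnrm : IsNorm nrm) (hγ : 0 ≤ γ) (hβ : 0 ≤ β) (hnet : ∀ f ∈ K, ∃ p ∈ P, nrm (a f - p) ≤ ε)
    (hM : ∀ x y, ‖M x - M y‖ ≤ γ * nrm (x - y) ^ β + E) (hE : ∀ f ∈ K, ‖f - M (a f)‖ ≤ E) :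
    K ⊆ ⋃ c ∈ P.image M, closedBall c (γ * ε ^ β + 2 * E) := by
  intro f hf
  obtain ⟨p, hp, hfp⟩ := hnet f hf
  refine Set.mem_biUnion (Finset.mem_image_of_mem M hp) ?_
  have := mul_le_mul_of_nonneg_left (Real.rpow_le_rpow (hnrm.1 _) hfp hβ) hγ
  rw [mem_closedBall, dist_eq_norm]
  linarith [norm_sub_le_norm_sub_add_norm_sub f (M (a f)) (M p), hM (a f) p, hE f hf]

theorem entropyNumber_le_two_mul_boundedStableWidth_add {C γ β : ℝ} (hC : 0 < C)
    (hKC : ∀ f ∈ K, ‖f‖ ≤ C) (hγ : 0 < γ) (hβ : 0 ≤ β) {m s N : ℕ} (hs : 1 ≤ s)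
    (hN : s * m ≤ N) :
    entropyNumber X K N ≤ 2 * boundedStableWidth X K m γ β + γ * (4 * γ * C / 2 ^ s) ^ β := by
  classical
  have hK : Bornology.IsBounded K := isBounded_iff_forall_norm_le.mpr ⟨C, hKC⟩
  refine le_of_forall_pos_lt_add fun η hη => ?_
  obtain ⟨_, ⟨nrm, a, M, hnrm, ha, hM, rfl⟩, hE⟩ :=
    Real.lt_sInf_add_pos (boundedStableErrors_nonempty (K := K) hγ.le m β) (half_pos hη)
  set E := ⨆ f : K, ‖(f : X) - M (a (f : X))‖
  have haR : ∀ f ∈ K, nrm (a f) ≤ γ * C := fun f hf =>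
    (ha f hf).trans (mul_le_mul_of_nonneg_left (hKC f hf) hγ.le)
  obtain ⟨P, hP, hnet⟩ := hnrm.exists_finset_card_le_forall_le (mul_pos hγ hC).le
    (show 0 < 4 * (γ * C) / 2 ^ s by positivity)
  have hcard : (P.image M).card ≤ 2 ^ N := by
    refine Finset.card_image_le.trans ?_
    have := hP.trans ((one_add_two_mul_div_pow_le (mul_pos hγ hC) hs m).trans
      (pow_le_pow_right₀ one_le_two hN))
    exact_mod_cast this
  have hE0 : 0 ≤ E := Real.iSup_nonneg fun _ => norm_nonneg _
  have hcover := subset_biUnion_closedBall_image hnrm hγ.le hβ (fun f hf => hnet _ (haR f hf))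
    hM fun f hf => norm_sub_le_iSup_of_forall_le hK hnrm hγ.le hβ haR hM hf
  have hρ : 0 < γ * (4 * (γ * C) / 2 ^ s) ^ β + 2 * E := by positivity
  have := entropyNumber_le_of_subset_biUnion hρ _ hcard hcover
  rw [boundedStableWidth_eq_sInf, mul_assoc 4 γ C]
  linarith

theorem boundedStableWidth_mul_succ_le {r γ β Λ : ℝ} (hr : 0 < r) {q : ℕ} (hq : 4 ≤ (q : ℝ) ^ r)
    (hΛ : ∀ m : ℕ, ((m : ℝ) + 1) ^ r * boundedStableWidth X K m γ β ≤ Λ) (n : ℕ) :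
    boundedStableWidth X K (q * (n + 1)) γ β ≤ ((n : ℝ) + 1) ^ (-r) * Λ / 4 := by
  have hpow : 4 * ((n : ℝ) + 1) ^ r ≤ (((q * (n + 1) : ℕ) : ℝ) + 1) ^ r :=
    calc 4 * ((n : ℝ) + 1) ^ r ≤ (q : ℝ) ^ r * ((n : ℝ) + 1) ^ r := by gcongr
      _ = ((q * (n + 1) : ℕ) : ℝ) ^ r := by
        push_cast; rw [Real.mul_rpow (by positivity) (by positivity)]
      _ ≤ (((q * (n + 1) : ℕ) : ℝ) + 1) ^ r := by gcongr; linarith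
  have key := (mul_le_mul_of_nonneg_right hpow (boundedStableWidth_nonneg _ γ β)).trans
    (hΛ (q * (n + 1)))
  rw [Real.rpow_neg (by positivity), inv_mul_eq_div, div_div, le_div_iff₀ (by positivity)]
  linarith

end Widths

/-- Carl-type inequality, with a logarithmic loss, for the bounded stable
manifold widths: there is c = c(r,β,γ,C₀(K)) such that for all n ≥ 3,
ε_{⌈c n ln n⌉}(K)_X ≤ (n+1)^{-r} · sup_{m≥0}(m+1)^r δ̃_{m,γ,β}(K)_X. -/
theorem stmt11 {X : Type*} [NormedAddCommGroup X] (r γ β : ℝ)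
    (hr : 0 < r) (hγ : 0 < γ) (hβ : 0 < β) (K : Set X) (hK : IsCompact K) :
    ∃ c : ℝ, 0 < c ∧ ∀ n : ℕ, 3 ≤ n → ∀ Λ : ℝ,
      (∀ m : ℕ, ((m : ℝ) + 1) ^ r * boundedStableWidth X K m γ β ≤ Λ) →
      entropyNumber X K ⌈c * n * Real.log n⌉₊ ≤ ((n : ℝ) + 1) ^ (-r) * Λ := by
  rcases K.subsingleton_or_nontrivial with hsub | ⟨f₁, hf₁, f₂, hf₂, hne⟩
  · refine ⟨1, one_pos, fun n _ Λ hΛ => (entropyNumber_nonpos_of_subsingleton hsub _).trans ?_⟩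
    have := (boundedStableWidth_nonneg 0 γ β).trans (by simpa using hΛ 0)
    positivity
  obtain ⟨C, hC, hKC⟩ := hK.isBounded.exists_pos_norm_le
  obtain ⟨q, hq, hq4⟩ := exists_nat_le_rpow hr 4
  set Λ₀ := ‖f₁ - f₂‖ / 2
  have hΛ₀ : 0 < Λ₀ := half_pos (norm_pos_iff.mpr (sub_ne_zero.mpr hne))
  obtain ⟨c, hc, hlog⟩ := exists_pos_forall_mul_log_lt_div hq
    (A := (max (Real.log (2 * γ * (4 * γ * C) ^ β / Λ₀)) 0 + r) / (β * Real.log 2))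
    (by positivity)
  refine ⟨c, hc, fun n hn Λ hΛ => ?_⟩
  set s := ⌈c * n * Real.log n⌉₊ / (q * (n + 1))
  have hΛ₀Λ : Λ₀ ≤ Λ :=
    (half_norm_sub_le_boundedStableWidth_zero hK.isBounded hγ.le hβ.le hf₁ hf₂).trans
      (by simpa using hΛ 0)
  have hn3 : (3 : ℝ) ≤ n := by exact_mod_cast hn
  have hs : 1 ≤ s := Nat.cast_pos.mp <| lt_of_le_of_lt
    (mul_nonneg (by positivity) (Real.log_nonneg (by linarith))) (hlog n hn)
  have hε := mul_div_two_pow_rpow_le (s := s) hγ (by positivity) hβ hΛ₀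
    (by linarith [Real.exp_one_lt_d9]) (hlog n hn).le
  calc entropyNumber X K ⌈c * n * Real.log n⌉₊
      ≤ 2 * boundedStableWidth X K (q * (n + 1)) γ β + γ * (4 * γ * C / 2 ^ s) ^ β :=
        entropyNumber_le_two_mul_boundedStableWidth_add hC hKC hγ hβ.le hs (Nat.div_mul_le_self _ _)
    _ ≤ ((n : ℝ) + 1) ^ (-r) * Λ := by
        have := mul_le_mul_of_nonneg_left hΛ₀Λ
          (Real.rpow_nonneg (x := (n : ℝ) + 1) (by positivity) (-r))
        linarith [boundedStableWidth_mul_succ_le hr hq4 hΛ n]
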